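/- The formal transpose of the operator E_{λ,μ} = |y-z|²Δ_yΔ_z - 4μΣ_j(z_j-y_j)∂_{z_j}Δ_y - 4λΣ_j(y_j-z_j)∂_{y_j}Δ_z + 2μ(2μ+2-d)Δ_y + 2λ(2λ+2-d)Δ_z - 8λμΣ_j∂_{y_j}∂_{z_j} with respect to the L² pairing on ℝ^d × ℝ^d equals F_{λ,μ} = |y-z|²Δ_yΔ_z + 4(μ+1)Σ_j(z_j-y_j)∂_{z_j}Δ_y + 4(λ+1)Σ_j(y_j-z_j)∂_{y_j}Δ_z + 4(μ+1)(μ+d/2)Δ_y + 4(λ+1)(λ+d/2)Δ_z - 8(λ+1)(μ+1)Σ_j∂_{y_j}∂_{z_j}; that is, ∫∫ (E_{λ,μ}φ)ψ dy dz = ∫∫ φ (F_{λ,μ}ψ) dy dz for all φ, ψ ∈ C_c^∞(ℝ^d × ℝ^d). -/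

import Mathlib

open MeasureTheory

noncomputable section

variable {d : ℕ}

/-- Partial derivative in the `j`-th coordinate of the first (`y`) variable. -/
def Dy (j : Fin d) (u : EuclideanSpace ℝ (Fin d) × EuclideanSpace ℝ (Fin d) → ℂ) :
    EuclideanSpace ℝ (Fin d) × EuclideanSpace ℝ (Fin d) → ℂ :=
  fun p => fderiv ℝ u p (EuclideanSpace.single j 1, 0)

/-- Partial derivative in the `j`-th coordinate of the second (`z`) variable. -/
def Dz (j : Fin d) (u : EuclideanSpace ℝ (Fin d) × EuclideanSpace ℝ (Fin d) → ℂ) :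
    EuclideanSpace ℝ (Fin d) × EuclideanSpace ℝ (Fin d) → ℂ :=
  fun p => fderiv ℝ u p (0, EuclideanSpace.single j 1)

/-- The Laplacian `Δ_y` in the first variable. -/
def LapY (u : EuclideanSpace ℝ (Fin d) × EuclideanSpace ℝ (Fin d) → ℂ) :
    EuclideanSpace ℝ (Fin d) × EuclideanSpace ℝ (Fin d) → ℂ :=
  fun p => ∑ j : Fin d, Dy j (Dy j u) p

/-- The Laplacian `Δ_z` in the second variable. -/
def LapZ (u : EuclideanSpace ℝ (Fin d) × EuclideanSpace ℝ (Fin d) → ℂ) :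
    EuclideanSpace ℝ (Fin d) × EuclideanSpace ℝ (Fin d) → ℂ :=
  fun p => ∑ j : Fin d, Dz j (Dz j u) p

/-- The operator `E_{λ,μ}`. -/
def Eop (lam μ : ℂ) (u : EuclideanSpace ℝ (Fin d) × EuclideanSpace ℝ (Fin d) → ℂ) :
    EuclideanSpace ℝ (Fin d) × EuclideanSpace ℝ (Fin d) → ℂ :=
  fun p =>
    (‖p.1 - p.2‖ ^ 2 : ℝ) * LapY (LapZ u) p
      - 4 * μ * ∑ j : Fin d, ((p.2 j - p.1 j : ℝ) : ℂ) * Dz j (LapY u) p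
      - 4 * lam * ∑ j : Fin d, ((p.1 j - p.2 j : ℝ) : ℂ) * Dy j (LapZ u) p
      + 2 * μ * (2 * μ + 2 - (d : ℂ)) * LapY u p
      + 2 * lam * (2 * lam + 2 - (d : ℂ)) * LapZ u p
      - 8 * lam * μ * ∑ j : Fin d, Dy j (Dz j u) p

/-- The operator `F_{λ,μ}` (the formal transpose of `E_{λ,μ}`), with `ρ = d/2`. -/
def Fop (lam μ : ℂ) (u : EuclideanSpace ℝ (Fin d) × EuclideanSpace ℝ (Fin d) → ℂ) :
    EuclideanSpace ℝ (Fin d) × EuclideanSpace ℝ (Fin d) → ℂ :=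
  fun p =>
    (‖p.1 - p.2‖ ^ 2 : ℝ) * LapY (LapZ u) p
      + 4 * (μ + 1) * ∑ j : Fin d, ((p.2 j - p.1 j : ℝ) : ℂ) * Dz j (LapY u) p
      + 4 * (lam + 1) * ∑ j : Fin d, ((p.1 j - p.2 j : ℝ) : ℂ) * Dy j (LapZ u) p
      + 4 * (μ + 1) * (μ + (d : ℂ) / 2) * LapY u p
      + 4 * (lam + 1) * (lam + (d : ℂ) / 2) * LapZ u p
      - 8 * (lam + 1) * (μ + 1) * ∑ j : Fin d, Dy j (Dz j u) p

abbrev Q (d : ℕ) := EuclideanSpace ℝ (Fin d) × EuclideanSpace ℝ (Fin d)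

instance : MeasureTheory.Measure.IsAddHaarMeasure (volume : Measure (Q d)) :=
  MeasureTheory.Measure.prod.instIsAddHaarMeasure _ _


def D (v : Q d) (u : Q d → ℂ) : Q d → ℂ := fun p => fderiv ℝ u p v

lemma D_contDiff {u : Q d → ℂ} (hu : ContDiff ℝ (⊤ : ℕ∞) u) (v : Q d) :
    ContDiff ℝ (⊤ : ℕ∞) (D v u) :=
  (hu.fderiv_right (by simp)).clm_apply contDiff_const

lemma D_add {f g : Q d → ℂ} (hf : Differentiable ℝ f) (hg : Differentiable ℝ g) (v : Q d) :
    D v (fun p => f p + g p) = fun p => D v f p + D v g p := by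
  funext p; simp only [D]; rw [fderiv_fun_add (hf p) (hg p)]; simp

lemma D_const_mul (c : ℂ) {f : Q d → ℂ} (hf : Differentiable ℝ f) (v : Q d) :
    D v (fun p => c * f p) = fun p => c * D v f p := by
  funext p; simp only [D]; rw [fderiv_const_mul (hf p)]; simp

lemma D_sum {ι : Type*} (s : Finset ι) {f : ι → Q d → ℂ}
    (hf : ∀ i, Differentiable ℝ (f i)) (v : Q d) :
    D v (fun p => ∑ i ∈ s, f i p) = fun p => ∑ i ∈ s, D v (f i) p := by
  funext p; simp only [D]; rw [fderiv_fun_sum (fun i _ => (hf i) p)]; simp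

lemma D_mul {f g : Q d → ℂ} (hf : Differentiable ℝ f) (hg : Differentiable ℝ g) (v : Q d) :
    D v (fun p => f p * g p) = fun p => D v f p * g p + f p * D v g p := by
  funext p; simp only [D]; rw [fderiv_fun_mul (hf p) (hg p)]
  simp [smul_eq_mul]; ring

lemma D_clm (L : Q d →L[ℝ] ℂ) (v : Q d) : D v (fun p => L p) = fun _ => L v := by
  funext p; simp only [D]; rw [L.fderiv]

lemma D_clm_mul (L : Q d →L[ℝ] ℂ) {g : Q d → ℂ} (hg : Differentiable ℝ g) (v : Q d) :
    D v (fun p => L p * g p) = fun p => L v * g p + L p * D v g p := by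
  rw [D_mul L.differentiable hg v, D_clm L v]

lemma D_swap {u : Q d → ℂ} (hu : ContDiff ℝ (⊤ : ℕ∞) u) (v w : Q d) :
    D v (D w u) = D w (D v u) := by
  have hd : Differentiable ℝ (fderiv ℝ u) := (hu.fderiv_right (m := (⊤ : ℕ∞)) (by simp)).differentiable (by simp)
  have h1 : ∀ (v w : Q d) (p : Q d), D v (D w u) p = fderiv ℝ (fderiv ℝ u) p v w := by
    intro v w p
    show fderiv ℝ (fun q => (fderiv ℝ u q) w) p v = _
    rw [fderiv_clm_apply (hd p) (differentiableAt_const w)]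
    simp
  funext p
  rw [h1, h1]
  exact (hu.contDiffAt.isSymmSndFDerivAt (by rw [minSmoothness_of_isRCLikeNormedField]; exact WithTop.coe_le_coe.mpr le_top)) v w


def W (j : Fin d) : Q d →L[ℝ] ℂ :=
  Complex.ofRealCLM.comp
    ((EuclideanSpace.proj j).comp (ContinuousLinearMap.fst ℝ _ _)
      - (EuclideanSpace.proj j).comp (ContinuousLinearMap.snd ℝ _ _))

def ey (j : Fin d) : Q d := ((EuclideanSpace.single j 1 : EuclideanSpace ℝ (Fin d)), 0)
def ez (j : Fin d) : Q d := (0, (EuclideanSpace.single j 1 : EuclideanSpace ℝ (Fin d)))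

lemma W_apply (j : Fin d) (p : Q d) : W j p = ((p.1 j : ℝ) : ℂ) - ((p.2 j : ℝ) : ℂ) := by
  simp [W]

lemma W_ey (j k : Fin d) : W j (ey k) = if j = k then 1 else 0 := by
  simp [W_apply, ey, EuclideanSpace.single_apply]; split_ifs <;> simp

lemma W_ez (j k : Fin d) : W j (ez k) = if j = k then -1 else 0 := by
  simp [W_apply, ez, EuclideanSpace.single_apply]; split_ifs <;> simp

def aF : Q d → ℂ := fun p => ∑ j : Fin d, W j p * W j p

lemma aF_eq (p : Q d) : ((‖p.1 - p.2‖ ^ 2 : ℝ) : ℂ) = aF p := by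
  have h : ‖p.1 - p.2‖ ^ 2 = ∑ j : Fin d, (p.1 j - p.2 j) ^ 2 := by
    rw [EuclideanSpace.norm_eq, Real.sq_sqrt (by positivity)]
    congr 1; funext j
    simp [Real.norm_eq_abs, sq_abs]
  rw [h]
  push_cast
  simp only [aF, W_apply]
  congr 1; funext j; ring

lemma aF_contDiff : ContDiff ℝ (⊤ : ℕ∞) (aF (d := d)) :=
  ContDiff.sum fun j _ => ((W j).contDiff).mul ((W j).contDiff)
def lapE (e : Fin d → Q d) (u : Q d → ℂ) : Q d → ℂ :=
  fun p => ∑ k : Fin d, D (e k) (D (e k) u) p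

lemma lapE_contDiff (e : Fin d → Q d) {u : Q d → ℂ} (hu : ContDiff ℝ (⊤ : ℕ∞) u) :
    ContDiff ℝ (⊤ : ℕ∞) (lapE e u) :=
  ContDiff.sum fun k _ => D_contDiff (D_contDiff hu (e k)) (e k)

lemma D_lapE (v : Q d) (e : Fin d → Q d) {u : Q d → ℂ} (hu : ContDiff ℝ (⊤ : ℕ∞) u) :
    D v (lapE e u) = lapE e (D v u) := by
  unfold lapE
  rw [D_sum _ (fun k => (D_contDiff (D_contDiff hu (e k)) (e k)).differentiable (by simp)) v]
  funext p
  refine Finset.sum_congr rfl fun k _ => ?_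
  rw [D_swap (D_contDiff hu (e k)) v (e k), D_swap hu (e k) v]

lemma DD_sum (v : Q d) {h : Fin d → Q d → ℂ} (hh : ∀ l, ContDiff ℝ (⊤ : ℕ∞) (h l)) :
    D v (D v (fun q => ∑ l : Fin d, h l q)) = fun q => ∑ l : Fin d, D v (D v (h l)) q := by
  rw [D_sum _ (fun l => (hh l).differentiable (by simp)) v,
      D_sum _ (fun l => (D_contDiff (hh l) v).differentiable (by simp)) v]

lemma push_DD {u : Q d → ℂ} (hu : ContDiff ℝ (⊤ : ℕ∞) u) (v w : Q d) :
    D v (D w (D w u)) = D w (D w (D v u)) := by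
  rw [D_swap (D_contDiff hu w) v w]
  exact congrArg (D w) (D_swap hu v w)

lemma DD_DD_swap {u : Q d → ℂ} (hu : ContDiff ℝ (⊤ : ℕ∞) u) (v w : Q d) :
    D v (D v (D w (D w u))) = D w (D w (D v (D v u))) := by
  rw [congrArg (D v) (push_DD hu v w)]
  exact push_DD (D_contDiff hu v) v w

lemma lapE_comm (e f : Fin d → Q d) {u : Q d → ℂ} (hu : ContDiff ℝ (⊤ : ℕ∞) u) :
    lapE e (lapE f u) = lapE f (lapE e u) := by
  have key : ∀ (e f : Fin d → Q d), lapE e (lapE f u)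
      = fun p => ∑ k : Fin d, ∑ l : Fin d, D (e k) (D (e k) (D (f l) (D (f l) u))) p := by
    intro e f
    unfold lapE
    funext p
    refine Finset.sum_congr rfl fun k _ => ?_
    rw [DD_sum (e k) (fun l => D_contDiff (D_contDiff hu (f l)) (f l))]
  rw [key e f, key f e]
  funext p
  rw [Finset.sum_comm]
  refine Finset.sum_congr rfl fun l _ => Finset.sum_congr rfl fun k _ => ?_
  rw [DD_DD_swap hu]

lemma lapE_add (e : Fin d → Q d) {f g : Q d → ℂ} (hf : ContDiff ℝ (⊤ : ℕ∞) f) (hg : ContDiff ℝ (⊤ : ℕ∞) g) :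
    lapE e (fun p => f p + g p) = fun p => lapE e f p + lapE e g p := by
  unfold lapE
  funext p
  rw [← Finset.sum_add_distrib]
  refine Finset.sum_congr rfl fun k _ => ?_
  rw [D_add (hf.differentiable (by simp)) (hg.differentiable (by simp)),
      D_add ((D_contDiff hf (e k)).differentiable (by simp))
        ((D_contDiff hg (e k)).differentiable (by simp))]

lemma lapE_const_mul (e : Fin d → Q d) (c : ℂ) {g : Q d → ℂ} (hg : ContDiff ℝ (⊤ : ℕ∞) g) :
    lapE e (fun p => c * g p) = fun p => c * lapE e g p := by
  unfold lapE
  funext p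
  rw [Finset.mul_sum]
  refine Finset.sum_congr rfl fun k _ => ?_
  rw [D_const_mul c (hg.differentiable (by simp)),
      D_const_mul c ((D_contDiff hg (e k)).differentiable (by simp))]

lemma lapE_fsum (e : Fin d → Q d) {h : Fin d → Q d → ℂ} (hh : ∀ l, ContDiff ℝ (⊤ : ℕ∞) (h l)) :
    lapE e (fun p => ∑ l : Fin d, h l p) = fun p => ∑ l : Fin d, lapE e (h l) p := by
  unfold lapE
  funext p
  rw [Finset.sum_comm]
  refine Finset.sum_congr rfl fun k _ => ?_
  rw [DD_sum (e k) hh]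

lemma lapE_clm_mul (e : Fin d → Q d) (L : Q d →L[ℝ] ℂ) {g : Q d → ℂ} (hg : ContDiff ℝ (⊤ : ℕ∞) g) :
    lapE e (fun p => L p * g p)
      = fun p => (∑ k : Fin d, 2 * L (e k) * D (e k) g p) + L p * lapE e g p := by
  have hk : ∀ k, D (e k) (D (e k) (fun p => L p * g p))
      = fun p => 2 * L (e k) * D (e k) g p + L p * D (e k) (D (e k) g) p := by
    intro k
    rw [D_clm_mul L (hg.differentiable (by simp)) (e k),
        D_add (Differentiable.const_mul (hg.differentiable (by simp)) _)
          (L.differentiable.fun_mul ((D_contDiff hg (e k)).differentiable (by simp))),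
        D_const_mul _ (hg.differentiable (by simp)),
        D_clm_mul L ((D_contDiff hg (e k)).differentiable (by simp))]
    funext q; ring
  unfold lapE
  funext p
  simp only [hk]
  rw [Finset.sum_add_distrib, Finset.mul_sum]

lemma lapE_W_mul (e : Fin d → Q d) (s : ℂ)
    (hW : ∀ j k, W j (e k) = if j = k then s else 0) (j : Fin d)
    {g : Q d → ℂ} (hg : ContDiff ℝ (⊤ : ℕ∞) g) :
    lapE e (fun p => W j p * g p)
      = fun p => 2 * s * D (e j) g p + W j p * lapE e g p := by
  rw [lapE_clm_mul e (W j) hg]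
  funext p
  congr 1
  have : ∀ k, 2 * W j (e k) * D (e k) g p = if j = k then 2 * s * D (e k) g p else 0 := by
    intro k; rw [hW j k]; split_ifs <;> ring
  simp only [this]
  simp [Finset.sum_ite_eq]

lemma D_aF (v : Q d) : D v (aF (d := d)) = fun p => ∑ j : Fin d, 2 * W j v * W j p := by
  unfold aF
  rw [D_sum _ (fun j => ((W j).differentiable.fun_mul (W j).differentiable)) v]
  funext p
  refine Finset.sum_congr rfl fun j _ => ?_
  rw [D_clm_mul (W j) (W j).differentiable v, D_clm (W j) v]
  ring

lemma lapE_aF_mul (e : Fin d → Q d) (s : ℂ)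
    (hW : ∀ j k, W j (e k) = if j = k then s else 0) (hs : s * s = 1)
    {g : Q d → ℂ} (hg : ContDiff ℝ (⊤ : ℕ∞) g) :
    lapE e (fun p => aF p * g p)
      = fun p => aF p * lapE e g p + 4 * s * (∑ k : Fin d, W k p * D (e k) g p)
          + 2 * (d : ℂ) * g p := by
  have hDa : ∀ k p, D (e k) (aF (d := d)) p = 2 * s * W k p := by
    intro k p
    rw [congrFun (D_aF (e k)) p]
    have : ∀ j, 2 * W j (e k) * W j p = if j = k then 2 * s * W j p else 0 := by
      intro j; rw [hW j k]; split_ifs <;> ring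
    simp only [this]
    simp [Finset.sum_ite_eq']
  have h1 : ∀ k, D (e k) (fun p => aF p * g p)
      = fun p => 2 * s * (W k p * g p) + aF p * D (e k) g p := by
    intro k
    rw [D_mul (aF_contDiff.differentiable (by simp)) (hg.differentiable (by simp))]
    funext p
    rw [hDa k p]; ring
  have h2 : ∀ k, D (e k) (D (e k) (fun p => aF p * g p))
      = fun p => 2 * (s * s) * g p + 4 * s * (W k p * D (e k) g p)
          + aF p * D (e k) (D (e k) g) p := by
    intro k
    rw [h1 k,
        D_add (Differentiable.const_mul ((W k).differentiable.fun_mul (hg.differentiable (by simp))) _)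
          (aF_contDiff.differentiable (by simp) |>.fun_mul ((D_contDiff hg (e k)).differentiable (by simp))),
        D_const_mul _ ((W k).differentiable.fun_mul (hg.differentiable (by simp))),
        D_clm_mul (W k) (hg.differentiable (by simp)),
        D_mul (aF_contDiff.differentiable (by simp)) ((D_contDiff hg (e k)).differentiable (by simp))]
    funext p
    simp only [hDa, hW, if_pos rfl, if_true, eq_self_iff_true]
    ring
  unfold lapE
  funext p
  simp only [h2]
  rw [Finset.sum_add_distrib, Finset.sum_add_distrib, Finset.mul_sum, Finset.mul_sum, hs]
  simp [Finset.sum_const, Finset.card_univ]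
  ring

lemma lapE_sum_W_mul (e f : Fin d → Q d) (s : ℂ)
    (hW : ∀ j k, W j (e k) = if j = k then s else 0)
    {g : Q d → ℂ} (hg : ContDiff ℝ (⊤ : ℕ∞) g) :
    lapE e (fun p => ∑ j : Fin d, W j p * D (f j) g p)
      = fun p => (∑ j : Fin d, W j p * D (f j) (lapE e g) p)
          + 2 * s * (∑ j : Fin d, D (e j) (D (f j) g) p) := by
  rw [lapE_fsum e (fun j => ((W j).contDiff).mul (D_contDiff hg (f j)))]
  funext p
  have hj : ∀ j, lapE e (fun p => W j p * D (f j) g p)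
      = fun p => 2 * s * D (e j) (D (f j) g) p + W j p * D (f j) (lapE e g) p := by
    intro j
    rw [lapE_W_mul e s hW j (D_contDiff hg (f j)), D_lapE (f j) e hg]
  simp only [hj]
  rw [Finset.sum_add_distrib, Finset.mul_sum]
  ring

lemma D_hcs {u : Q d → ℂ} (hu : HasCompactSupport u) (v : Q d) :
    HasCompactSupport (D v u) :=
  hu.fderiv_apply ℝ v

lemma hcs_mul_right {f g : Q d → ℂ} (h : HasCompactSupport f) :
    HasCompactSupport (fun p => f p * g p) :=
  h.mul_right

lemma hcs_mul_left {f g : Q d → ℂ} (h : HasCompactSupport g) :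
    HasCompactSupport (fun p => f p * g p) :=
  h.mul_left

lemma integrable_cpt {f : Q d → ℂ} (hf : Continuous f) (hc : HasCompactSupport f) :
    Integrable f := hf.integrable_of_hasCompactSupport hc

lemma ibpD (v : Q d) {f g : Q d → ℂ} (hf : ContDiff ℝ (⊤ : ℕ∞) f) (hfc : HasCompactSupport f)
    (hg : ContDiff ℝ (⊤ : ℕ∞) g) :
    ∫ p : Q d, D v f p * g p = - ∫ p : Q d, f p * D v g p := by
  have h1 : Integrable (fun p : Q d => fderiv ℝ f p v * g p) :=
    integrable_cpt (((D_contDiff hf v).continuous).mul hg.continuous)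
      (hcs_mul_right (D_hcs hfc v))
  have h2 : Integrable (fun p : Q d => f p * fderiv ℝ g p v) :=
    integrable_cpt (hf.continuous.mul (D_contDiff hg v).continuous)
      (hcs_mul_right hfc)
  have h3 : Integrable (fun p : Q d => f p * g p) :=
    integrable_cpt (hf.continuous.mul hg.continuous) (hcs_mul_right hfc)
  have := integral_mul_fderiv_eq_neg_fderiv_mul_of_integrable h1 h2 h3
    (fun x _ => (hf.differentiable (by simp)) x) (fun x _ => (hg.differentiable (by simp)) x)
  simp only [D]
  rw [this, neg_neg]

lemma lapE_hcs (e : Fin d → Q d) {u : Q d → ℂ} (hu : HasCompactSupport u) :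
    HasCompactSupport (lapE e u) := by
  unfold lapE
  classical
  induction (Finset.univ : Finset (Fin d)) using Finset.induction_on with
  | empty => simp only [Finset.sum_empty]; exact HasCompactSupport.zero
  | insert _ _ hx ih =>
      simp only [Finset.sum_insert hx]
      exact (D_hcs (D_hcs hu _) _).add ih

lemma move_lap (e : Fin d → Q d) {f g : Q d → ℂ} (hf : ContDiff ℝ (⊤ : ℕ∞) f)
    (hfc : HasCompactSupport f) (hg : ContDiff ℝ (⊤ : ℕ∞) g) :
    ∫ p : Q d, lapE e f p * g p = ∫ p : Q d, f p * lapE e g p := by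
  unfold lapE
  calc ∫ p : Q d, (∑ k : Fin d, D (e k) (D (e k) f) p) * g p
      = ∑ k : Fin d, ∫ p : Q d, D (e k) (D (e k) f) p * g p := by
        rw [show (fun p : Q d => (∑ k : Fin d, D (e k) (D (e k) f) p) * g p)
              = fun p => ∑ k : Fin d, D (e k) (D (e k) f) p * g p from
            funext fun p => Finset.sum_mul ..]
        exact integral_finset_sum _ fun k _ =>
          integrable_cpt ((D_contDiff (D_contDiff hf _) _).continuous.mul hg.continuous)
            (hcs_mul_right (D_hcs (D_hcs hfc _) _))
    _ = ∑ k : Fin d, ∫ p : Q d, f p * D (e k) (D (e k) g) p := by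
        refine Finset.sum_congr rfl fun k _ => ?_
        rw [ibpD (e k) (f := D (e k) f) (g := g) (D_contDiff hf (e k)) (D_hcs hfc (e k)) hg,
          ibpD (e k) (f := f) (g := D (e k) g) hf hfc (D_contDiff hg (e k)), neg_neg]
    _ = ∫ p : Q d, f p * ∑ k : Fin d, D (e k) (D (e k) g) p := by
        rw [show (fun p : Q d => f p * ∑ k : Fin d, D (e k) (D (e k) g) p)
              = fun p => ∑ k : Fin d, f p * D (e k) (D (e k) g) p from
            funext fun p => Finset.mul_sum ..]
        exact (integral_finset_sum _ fun k _ =>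
          integrable_cpt (hf.continuous.mul (D_contDiff (D_contDiff hg _) _).continuous)
            (hcs_mul_right hfc)).symm

lemma X1 {g : Q d → ℂ} (hg : ContDiff ℝ (⊤ : ℕ∞) g) :
    lapE ez (lapE ey (fun p => aF p * g p)) = fun p =>
      aF p * lapE ey (lapE ez g) p
        + 4 * (∑ j : Fin d, W j p * D (ey j) (lapE ez g) p)
        - 4 * (∑ j : Fin d, W j p * D (ez j) (lapE ey g) p)
        + 2 * (d : ℂ) * lapE ey g p + 2 * (d : ℂ) * lapE ez g p
        - 8 * (∑ j : Fin d, D (ey j) (D (ez j) g) p) := by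
  have hL := lapE_contDiff ey hg
  have hS : ContDiff ℝ (⊤ : ℕ∞) (fun p => ∑ k : Fin d, W k p * D (ey k) g p) :=
    ContDiff.sum fun k _ => ((W k).contDiff).mul (D_contDiff hg (ey k))
  rw [lapE_aF_mul ey 1 W_ey (by norm_num) hg]
  rw [lapE_add ez ((aF_contDiff.mul hL).add (contDiff_const.mul hS)) (contDiff_const.mul hg)]
  rw [lapE_add ez (aF_contDiff.mul hL) (contDiff_const.mul hS)]
  rw [lapE_aF_mul ez (-1) W_ez (by norm_num) hL]
  rw [lapE_const_mul ez _ hS, lapE_const_mul ez _ hg]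
  rw [lapE_sum_W_mul ez ey (-1) W_ez hg]
  rw [lapE_comm ez ey hg]
  have hsw : ∀ p : Q d, ∑ j : Fin d, D (ez j) (D (ey j) g) p
      = ∑ j : Fin d, D (ey j) (D (ez j) g) p :=
    fun p => Finset.sum_congr rfl fun j _ => by rw [D_swap hg]
  funext p
  simp only [hsw]
  ring

lemma X2 (j : Fin d) {g : Q d → ℂ} (hg : ContDiff ℝ (⊤ : ℕ∞) g) :
    lapE ey (D (ez j) (fun p => W j p * g p)) = fun p =>
      -lapE ey g p + 2 * D (ey j) (D (ez j) g) p + W j p * D (ez j) (lapE ey g) p := by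
  have h1 : D (ez j) (fun p => W j p * g p)
      = fun p => (-1 : ℂ) * g p + W j p * D (ez j) g p := by
    rw [D_clm_mul (W j) (hg.differentiable (by simp)) (ez j)]
    funext p
    rw [W_ez j j]; simp
  rw [h1,
      lapE_add ey (contDiff_const.mul hg) (((W j).contDiff).mul (D_contDiff hg (ez j))),
      lapE_const_mul ey _ hg,
      lapE_W_mul ey 1 W_ey j (D_contDiff hg (ez j)),
      ← D_lapE (ez j) ey hg]
  funext p; ring

lemma X3 (j : Fin d) {g : Q d → ℂ} (hg : ContDiff ℝ (⊤ : ℕ∞) g) :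
    lapE ez (D (ey j) (fun p => W j p * g p)) = fun p =>
      lapE ez g p - 2 * D (ey j) (D (ez j) g) p + W j p * D (ey j) (lapE ez g) p := by
  have h1 : D (ey j) (fun p => W j p * g p)
      = fun p => (1 : ℂ) * g p + W j p * D (ey j) g p := by
    rw [D_clm_mul (W j) (hg.differentiable (by simp)) (ey j)]
    funext p
    rw [W_ey j j]; simp
  rw [h1,
      lapE_add ez (contDiff_const.mul hg) (((W j).contDiff).mul (D_contDiff hg (ey j))),
      lapE_const_mul ez _ hg,
      lapE_W_mul ez (-1) W_ez j (D_contDiff hg (ey j)),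
      ← D_lapE (ey j) ez hg,
      D_swap hg (ez j) (ey j)]
  funext p; ring

section Terms
variable {φ ψ : Q d → ℂ}

lemma T1 (hφ : ContDiff ℝ (⊤ : ℕ∞) φ) (hφc : HasCompactSupport φ) (hψ : ContDiff ℝ (⊤ : ℕ∞) ψ) :
    ∫ p : Q d, (aF p * lapE ey (lapE ez φ) p) * ψ p
      = ∫ p : Q d, φ p *
          (aF p * lapE ey (lapE ez ψ) p
            + 4 * (∑ j : Fin d, W j p * D (ey j) (lapE ez ψ) p)
            - 4 * (∑ j : Fin d, W j p * D (ez j) (lapE ey ψ) p)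
            + 2 * (d : ℂ) * lapE ey ψ p + 2 * (d : ℂ) * lapE ez ψ p
            - 8 * (∑ j : Fin d, D (ey j) (D (ez j) ψ) p)) := by
  have h0 : (fun p : Q d => (aF p * lapE ey (lapE ez φ) p) * ψ p)
      = fun p => lapE ey (lapE ez φ) p * (aF p * ψ p) := funext fun p => by ring
  rw [h0,
      move_lap ey (lapE_contDiff ez hφ) (lapE_hcs ez hφc) (aF_contDiff.mul hψ),
      move_lap ez hφ hφc (lapE_contDiff ey (aF_contDiff.mul hψ)),
      X1 hψ]

lemma T2 (hφ : ContDiff ℝ (⊤ : ℕ∞) φ) (hφc : HasCompactSupport φ) (hψ : ContDiff ℝ (⊤ : ℕ∞) ψ)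
    (hψc : HasCompactSupport ψ) :
    ∫ p : Q d, (∑ j : Fin d, W j p * D (ez j) (lapE ey φ) p) * ψ p
      = ∫ p : Q d, φ p * ((d : ℂ) * lapE ey ψ p
          - 2 * (∑ j : Fin d, D (ey j) (D (ez j) ψ) p)
          - (∑ j : Fin d, W j p * D (ez j) (lapE ey ψ) p)) := by
  have key : ∀ j : Fin d, ∫ p : Q d, W j p * D (ez j) (lapE ey φ) p * ψ p
      = -∫ p : Q d, φ p * (-lapE ey ψ p + 2 * D (ey j) (D (ez j) ψ) p
          + W j p * D (ez j) (lapE ey ψ) p) := by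
    intro j
    have h0 : (fun p : Q d => W j p * D (ez j) (lapE ey φ) p * ψ p)
        = fun p => D (ez j) (lapE ey φ) p * (W j p * ψ p) := funext fun p => by ring
    calc ∫ p : Q d, W j p * D (ez j) (lapE ey φ) p * ψ p
        = ∫ p : Q d, D (ez j) (lapE ey φ) p * (W j p * ψ p) := by rw [h0]
      _ = -∫ p : Q d, lapE ey φ p * D (ez j) (fun q => W j q * ψ q) p :=
          ibpD (ez j) (lapE_contDiff ey hφ) (lapE_hcs ey hφc) (((W j).contDiff).mul hψ)
      _ = -∫ p : Q d, φ p * lapE ey (D (ez j) (fun q => W j q * ψ q)) p := by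
          rw [move_lap ey hφ hφc (D_contDiff (((W j).contDiff).mul hψ) (ez j))]
      _ = -∫ p : Q d, φ p * (-lapE ey ψ p + 2 * D (ey j) (D (ez j) ψ) p
            + W j p * D (ez j) (lapE ey ψ) p) := by rw [X2 j hψ]
  calc ∫ p : Q d, (∑ j : Fin d, W j p * D (ez j) (lapE ey φ) p) * ψ p
      = ∑ j : Fin d, ∫ p : Q d, W j p * D (ez j) (lapE ey φ) p * ψ p := by
        rw [show (fun p : Q d => (∑ j : Fin d, W j p * D (ez j) (lapE ey φ) p) * ψ p)
            = fun p => ∑ j : Fin d, W j p * D (ez j) (lapE ey φ) p * ψ p from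
          funext fun p => Finset.sum_mul ..]
        exact integral_finset_sum _ fun j _ => integrable_cpt
          ((((W j).continuous).mul
            (D_contDiff (lapE_contDiff ey hφ) (ez j)).continuous).mul hψ.continuous)
          (hcs_mul_left hψc)
    _ = ∑ j : Fin d, -∫ p : Q d, φ p * (-lapE ey ψ p + 2 * D (ey j) (D (ez j) ψ) p
          + W j p * D (ez j) (lapE ey ψ) p) := Finset.sum_congr rfl fun j _ => key j
    _ = -∫ p : Q d, ∑ j : Fin d, φ p * (-lapE ey ψ p + 2 * D (ey j) (D (ez j) ψ) p
          + W j p * D (ez j) (lapE ey ψ) p) := by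
        rw [Finset.sum_neg_distrib, integral_finset_sum]
        intro j _
        exact integrable_cpt (hφ.continuous.mul (((lapE_contDiff ey hψ).continuous.neg.add
          ((continuous_const.mul (D_contDiff (D_contDiff hψ (ez j)) (ey j)).continuous))).add
          (((W j).continuous).mul (D_contDiff (lapE_contDiff ey hψ) (ez j)).continuous)))
          (hcs_mul_right hφc)
    _ = ∫ p : Q d, φ p * ((d : ℂ) * lapE ey ψ p
          - 2 * (∑ j : Fin d, D (ey j) (D (ez j) ψ) p)
          - (∑ j : Fin d, W j p * D (ez j) (lapE ey ψ) p)) := by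
        rw [← integral_neg]
        congr 1
        funext p
        rw [← Finset.mul_sum]
        rw [Finset.sum_add_distrib, Finset.sum_add_distrib, Finset.sum_const,
          Finset.card_univ, Fintype.card_fin, ← Finset.mul_sum]
        push_cast
        ring

lemma T3 (hφ : ContDiff ℝ (⊤ : ℕ∞) φ) (hφc : HasCompactSupport φ) (hψ : ContDiff ℝ (⊤ : ℕ∞) ψ)
    (hψc : HasCompactSupport ψ) :
    ∫ p : Q d, (∑ j : Fin d, W j p * D (ey j) (lapE ez φ) p) * ψ p
      = ∫ p : Q d, φ p * (-(d : ℂ) * lapE ez ψ p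
          + 2 * (∑ j : Fin d, D (ey j) (D (ez j) ψ) p)
          - (∑ j : Fin d, W j p * D (ey j) (lapE ez ψ) p)) := by
  have key : ∀ j : Fin d, ∫ p : Q d, W j p * D (ey j) (lapE ez φ) p * ψ p
      = -∫ p : Q d, φ p * (lapE ez ψ p - 2 * D (ey j) (D (ez j) ψ) p
          + W j p * D (ey j) (lapE ez ψ) p) := by
    intro j
    have h0 : (fun p : Q d => W j p * D (ey j) (lapE ez φ) p * ψ p)
        = fun p => D (ey j) (lapE ez φ) p * (W j p * ψ p) := funext fun p => by ring
    calc ∫ p : Q d, W j p * D (ey j) (lapE ez φ) p * ψ p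
        = ∫ p : Q d, D (ey j) (lapE ez φ) p * (W j p * ψ p) := by rw [h0]
      _ = -∫ p : Q d, lapE ez φ p * D (ey j) (fun q => W j q * ψ q) p :=
          ibpD (ey j) (lapE_contDiff ez hφ) (lapE_hcs ez hφc) (((W j).contDiff).mul hψ)
      _ = -∫ p : Q d, φ p * lapE ez (D (ey j) (fun q => W j q * ψ q)) p := by
          rw [move_lap ez hφ hφc (D_contDiff (((W j).contDiff).mul hψ) (ey j))]
      _ = -∫ p : Q d, φ p * (lapE ez ψ p - 2 * D (ey j) (D (ez j) ψ) p
            + W j p * D (ey j) (lapE ez ψ) p) := by rw [X3 j hψ]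
  calc ∫ p : Q d, (∑ j : Fin d, W j p * D (ey j) (lapE ez φ) p) * ψ p
      = ∑ j : Fin d, ∫ p : Q d, W j p * D (ey j) (lapE ez φ) p * ψ p := by
        rw [show (fun p : Q d => (∑ j : Fin d, W j p * D (ey j) (lapE ez φ) p) * ψ p)
            = fun p => ∑ j : Fin d, W j p * D (ey j) (lapE ez φ) p * ψ p from
          funext fun p => Finset.sum_mul ..]
        exact integral_finset_sum _ fun j _ => integrable_cpt
          ((((W j).continuous).mul
            (D_contDiff (lapE_contDiff ez hφ) (ey j)).continuous).mul hψ.continuous)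
          (hcs_mul_left hψc)
    _ = ∑ j : Fin d, -∫ p : Q d, φ p * (lapE ez ψ p - 2 * D (ey j) (D (ez j) ψ) p
          + W j p * D (ey j) (lapE ez ψ) p) := Finset.sum_congr rfl fun j _ => key j
    _ = -∫ p : Q d, ∑ j : Fin d, φ p * (lapE ez ψ p - 2 * D (ey j) (D (ez j) ψ) p
          + W j p * D (ey j) (lapE ez ψ) p) := by
        rw [Finset.sum_neg_distrib, integral_finset_sum]
        intro j _
        exact integrable_cpt (hφ.continuous.mul (((lapE_contDiff ez hψ).continuous.sub
          ((continuous_const.mul (D_contDiff (D_contDiff hψ (ez j)) (ey j)).continuous))).add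
          (((W j).continuous).mul (D_contDiff (lapE_contDiff ez hψ) (ey j)).continuous)))
          (hcs_mul_right hφc)
    _ = ∫ p : Q d, φ p * (-(d : ℂ) * lapE ez ψ p
          + 2 * (∑ j : Fin d, D (ey j) (D (ez j) ψ) p)
          - (∑ j : Fin d, W j p * D (ey j) (lapE ez ψ) p)) := by
        rw [← integral_neg]
        congr 1
        funext p
        rw [← Finset.mul_sum]
        rw [Finset.sum_add_distrib, Finset.sum_sub_distrib, Finset.sum_const,
          Finset.card_univ, Fintype.card_fin, ← Finset.mul_sum]
        push_cast
        ring

lemma T6 (hφ : ContDiff ℝ (⊤ : ℕ∞) φ) (hφc : HasCompactSupport φ) (hψ : ContDiff ℝ (⊤ : ℕ∞) ψ)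
    (hψc : HasCompactSupport ψ) :
    ∫ p : Q d, (∑ j : Fin d, D (ey j) (D (ez j) φ) p) * ψ p
      = ∫ p : Q d, φ p * (∑ j : Fin d, D (ey j) (D (ez j) ψ) p) := by
  have key : ∀ j : Fin d, ∫ p : Q d, D (ey j) (D (ez j) φ) p * ψ p
      = ∫ p : Q d, φ p * D (ey j) (D (ez j) ψ) p := by
    intro j
    rw [ibpD (ey j) (f := D (ez j) φ) (g := ψ) (D_contDiff hφ (ez j)) (D_hcs hφc (ez j)) hψ,
      ibpD (ez j) (f := φ) (g := D (ey j) ψ) hφ hφc (D_contDiff hψ (ey j)), neg_neg,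
      D_swap hψ (ez j) (ey j)]
  calc ∫ p : Q d, (∑ j : Fin d, D (ey j) (D (ez j) φ) p) * ψ p
      = ∑ j : Fin d, ∫ p : Q d, D (ey j) (D (ez j) φ) p * ψ p := by
        rw [show (fun p : Q d => (∑ j : Fin d, D (ey j) (D (ez j) φ) p) * ψ p)
            = fun p => ∑ j : Fin d, D (ey j) (D (ez j) φ) p * ψ p from
          funext fun p => Finset.sum_mul ..]
        exact integral_finset_sum _ fun j _ => integrable_cpt
          ((D_contDiff (D_contDiff hφ (ez j)) (ey j)).continuous.mul hψ.continuous)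
          (hcs_mul_left hψc)
    _ = ∑ j : Fin d, ∫ p : Q d, φ p * D (ey j) (D (ez j) ψ) p :=
        Finset.sum_congr rfl fun j _ => key j
    _ = ∫ p : Q d, φ p * (∑ j : Fin d, D (ey j) (D (ez j) ψ) p) := by
        rw [show (fun p : Q d => φ p * (∑ j : Fin d, D (ey j) (D (ez j) ψ) p))
            = fun p => ∑ j : Fin d, φ p * D (ey j) (D (ez j) ψ) p from
          funext fun p => Finset.mul_sum ..]
        exact (integral_finset_sum _ fun j _ => integrable_cpt
          (hφ.continuous.mul (D_contDiff (D_contDiff hψ (ez j)) (ey j)).continuous)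
          (hcs_mul_right hφc)).symm

end Terms

section Main
variable {φ ψ : Q d → ℂ}

lemma Dy_eq (j : Fin d) (u : Q d → ℂ) : Dy j u = D (ey j) u := rfl
lemma Dz_eq (j : Fin d) (u : Q d → ℂ) : Dz j u = D (ez j) u := rfl
lemma LapY_eq (u : Q d → ℂ) : LapY u = lapE ey u := rfl
lemma LapZ_eq (u : Q d → ℂ) : LapZ u = lapE ez u := rfl

lemma split6 {u1 u2 u3 u4 u5 u6 : Q d → ℂ} (c1 c2 c3 c4 c5 c6 : ℂ)
    (h1 : Integrable u1) (h2 : Integrable u2) (h3 : Integrable u3)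
    (h4 : Integrable u4) (h5 : Integrable u5) (h6 : Integrable u6) :
    ∫ p : Q d, (c1 * u1 p + c2 * u2 p + c3 * u3 p + c4 * u4 p + c5 * u5 p + c6 * u6 p)
      = c1 * (∫ p : Q d, u1 p) + c2 * (∫ p : Q d, u2 p) + c3 * (∫ p : Q d, u3 p)
        + c4 * (∫ p : Q d, u4 p) + c5 * (∫ p : Q d, u5 p) + c6 * (∫ p : Q d, u6 p) := by
  have H2 : Integrable (fun p : Q d => c1 * u1 p + c2 * u2 p) :=
    (h1.const_mul c1).add (h2.const_mul c2)
  have H3 : Integrable (fun p : Q d => c1 * u1 p + c2 * u2 p + c3 * u3 p) :=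
    H2.add (h3.const_mul c3)
  have H4 : Integrable (fun p : Q d => c1 * u1 p + c2 * u2 p + c3 * u3 p + c4 * u4 p) :=
    H3.add (h4.const_mul c4)
  have H5 : Integrable
      (fun p : Q d => c1 * u1 p + c2 * u2 p + c3 * u3 p + c4 * u4 p + c5 * u5 p) :=
    H4.add (h5.const_mul c5)
  rw [integral_add H5 (h6.const_mul c6), integral_add H4 (h5.const_mul c5),
      integral_add H3 (h4.const_mul c4), integral_add H2 (h3.const_mul c3),
      integral_add (h1.const_mul c1) (h2.const_mul c2)]
  simp only [integral_const_mul]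

end Main
/-- `F_{λ,μ}` is the formal transpose of `E_{λ,μ}` for the `L²` pairing:
`∫∫ (E_{λ,μ}φ) ψ = ∫∫ φ (F_{λ,μ}ψ)` for `φ, ψ ∈ C_c^∞(ℝ^d × ℝ^d)`. -/
theorem Eop_transpose_eq_Fop (d : ℕ) (hd : 1 ≤ d) (lam μ : ℂ)
    (φ ψ : EuclideanSpace ℝ (Fin d) × EuclideanSpace ℝ (Fin d) → ℂ)
    (hφ : ContDiff ℝ (⊤ : ℕ∞) φ) (hφc : HasCompactSupport φ)
    (hψ : ContDiff ℝ (⊤ : ℕ∞) ψ) (hψc : HasCompactSupport ψ) :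
    ∫ p : EuclideanSpace ℝ (Fin d) × EuclideanSpace ℝ (Fin d),
        Eop lam μ φ p * ψ p =
      ∫ p : EuclideanSpace ℝ (Fin d) × EuclideanSpace ℝ (Fin d),
        φ p * Fop lam μ ψ p := by
  have hb2 : ∀ (u : Q d → ℂ) (p : Q d),
      (∑ j : Fin d, ((p.2 j - p.1 j : ℝ) : ℂ) * D (ez j) u p)
        = -∑ j : Fin d, W j p * D (ez j) u p := by
    intro u p
    rw [← Finset.sum_neg_distrib]
    refine Finset.sum_congr rfl fun j _ => ?_
    rw [W_apply]; push_cast; ring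
  have hb3 : ∀ (u : Q d → ℂ) (p : Q d),
      (∑ j : Fin d, ((p.1 j - p.2 j : ℝ) : ℂ) * D (ey j) u p)
        = ∑ j : Fin d, W j p * D (ey j) u p := by
    intro u p
    refine Finset.sum_congr rfl fun j _ => ?_
    rw [W_apply]; push_cast; ring
  have hE : (fun p : Q d => Eop lam μ φ p * ψ p) = fun p =>
      (1 : ℂ) * ((aF p * lapE ey (lapE ez φ) p) * ψ p)
      + (4*μ) * ((∑ j : Fin d, W j p * D (ez j) (lapE ey φ) p) * ψ p)
      + (-(4*lam)) * ((∑ j : Fin d, W j p * D (ey j) (lapE ez φ) p) * ψ p)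
      + (2*μ*(2*μ+2-(d:ℂ))) * (lapE ey φ p * ψ p)
      + (2*lam*(2*lam+2-(d:ℂ))) * (lapE ez φ p * ψ p)
      + (-(8*lam*μ)) * ((∑ j : Fin d, D (ey j) (D (ez j) φ) p) * ψ p) := by
    funext p
    simp only [Eop, LapY_eq, LapZ_eq, Dy_eq, Dz_eq]
    rw [aF_eq, hb2 (lapE ey φ) p, hb3 (lapE ez φ) p]
    ring
  have hF : (fun p : Q d => φ p * Fop lam μ ψ p) = fun p =>
      φ p * ((1 : ℂ) * (aF p * lapE ey (lapE ez ψ) p)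
      + (-(4*(μ+1))) * (∑ j : Fin d, W j p * D (ez j) (lapE ey ψ) p)
      + (4*(lam+1)) * (∑ j : Fin d, W j p * D (ey j) (lapE ez ψ) p)
      + (4*(μ+1)*(μ+(d:ℂ)/2)) * lapE ey ψ p
      + (4*(lam+1)*(lam+(d:ℂ)/2)) * lapE ez ψ p
      + (-(8*(lam+1)*(μ+1))) * (∑ j : Fin d, D (ey j) (D (ez j) ψ) p)) := by
    funext p
    simp only [Fop, LapY_eq, LapZ_eq, Dy_eq, Dz_eq]
    rw [aF_eq, hb2 (lapE ey ψ) p, hb3 (lapE ez ψ) p]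
    ring
  -- continuity facts
  have caF : Continuous (aF (d := d)) := aF_contDiff.continuous
  have cLLφ : Continuous (lapE ey (lapE ez φ)) :=
    (lapE_contDiff ey (lapE_contDiff ez hφ)).continuous
  have cLLψ : Continuous (lapE ey (lapE ez ψ)) :=
    (lapE_contDiff ey (lapE_contDiff ez hψ)).continuous
  have cS2φ : Continuous (fun p : Q d => ∑ j : Fin d, W j p * D (ez j) (lapE ey φ) p) :=
    continuous_finset_sum _ fun j _ =>
      ((W j).continuous.mul (D_contDiff (lapE_contDiff ey hφ) (ez j)).continuous)
  have cS3φ : Continuous (fun p : Q d => ∑ j : Fin d, W j p * D (ey j) (lapE ez φ) p) :=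
    continuous_finset_sum _ fun j _ =>
      ((W j).continuous.mul (D_contDiff (lapE_contDiff ez hφ) (ey j)).continuous)
  have cS6φ : Continuous (fun p : Q d => ∑ j : Fin d, D (ey j) (D (ez j) φ) p) :=
    continuous_finset_sum _ fun j _ =>
      (D_contDiff (D_contDiff hφ (ez j)) (ey j)).continuous
  have cS2ψ : Continuous (fun p : Q d => ∑ j : Fin d, W j p * D (ez j) (lapE ey ψ) p) :=
    continuous_finset_sum _ fun j _ =>
      ((W j).continuous.mul (D_contDiff (lapE_contDiff ey hψ) (ez j)).continuous)
  have cS3ψ : Continuous (fun p : Q d => ∑ j : Fin d, W j p * D (ey j) (lapE ez ψ) p) :=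
    continuous_finset_sum _ fun j _ =>
      ((W j).continuous.mul (D_contDiff (lapE_contDiff ez hψ) (ey j)).continuous)
  have cS6ψ : Continuous (fun p : Q d => ∑ j : Fin d, D (ey j) (D (ez j) ψ) p) :=
    continuous_finset_sum _ fun j _ =>
      (D_contDiff (D_contDiff hψ (ez j)) (ey j)).continuous
  have cLYφ : Continuous (lapE ey φ) := (lapE_contDiff ey hφ).continuous
  have cLZφ : Continuous (lapE ez φ) := (lapE_contDiff ez hφ).continuous
  have cLYψ : Continuous (lapE ey ψ) := (lapE_contDiff ey hψ).continuous
  have cLZψ : Continuous (lapE ez ψ) := (lapE_contDiff ez hψ).continuous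
  -- integrability of the six ψ-side integrands
  have i1 : Integrable (fun p : Q d => (aF p * lapE ey (lapE ez φ) p) * ψ p) :=
    integrable_cpt ((caF.mul cLLφ).mul hψ.continuous) (hcs_mul_left hψc)
  have i2 : Integrable (fun p : Q d =>
      (∑ j : Fin d, W j p * D (ez j) (lapE ey φ) p) * ψ p) :=
    integrable_cpt (cS2φ.mul hψ.continuous) (hcs_mul_left hψc)
  have i3 : Integrable (fun p : Q d =>
      (∑ j : Fin d, W j p * D (ey j) (lapE ez φ) p) * ψ p) :=
    integrable_cpt (cS3φ.mul hψ.continuous) (hcs_mul_left hψc)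
  have i4 : Integrable (fun p : Q d => lapE ey φ p * ψ p) :=
    integrable_cpt (cLYφ.mul hψ.continuous) (hcs_mul_left hψc)
  have i5 : Integrable (fun p : Q d => lapE ez φ p * ψ p) :=
    integrable_cpt (cLZφ.mul hψ.continuous) (hcs_mul_left hψc)
  have i6 : Integrable (fun p : Q d =>
      (∑ j : Fin d, D (ey j) (D (ez j) φ) p) * ψ p) :=
    integrable_cpt (cS6φ.mul hψ.continuous) (hcs_mul_left hψc)
  -- integrability of the six φ-side atoms (after transposition)
  have cG1 : Continuous (fun p : Q d =>
      aF p * lapE ey (lapE ez ψ) p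
        + 4 * (∑ j : Fin d, W j p * D (ey j) (lapE ez ψ) p)
        - 4 * (∑ j : Fin d, W j p * D (ez j) (lapE ey ψ) p)
        + 2 * (d : ℂ) * lapE ey ψ p + 2 * (d : ℂ) * lapE ez ψ p
        - 8 * (∑ j : Fin d, D (ey j) (D (ez j) ψ) p)) := by
    exact ((((((caF.mul cLLψ).add (continuous_const.mul cS3ψ)).sub
      (continuous_const.mul cS2ψ)).add (continuous_const.mul cLYψ)).add
      (continuous_const.mul cLZψ)).sub (continuous_const.mul cS6ψ))
  have cG2 : Continuous (fun p : Q d => (d : ℂ) * lapE ey ψ p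
      - 2 * (∑ j : Fin d, D (ey j) (D (ez j) ψ) p)
      - (∑ j : Fin d, W j p * D (ez j) (lapE ey ψ) p)) :=
    ((continuous_const.mul cLYψ).sub (continuous_const.mul cS6ψ)).sub cS2ψ
  have cG3 : Continuous (fun p : Q d => -(d : ℂ) * lapE ez ψ p
      + 2 * (∑ j : Fin d, D (ey j) (D (ez j) ψ) p)
      - (∑ j : Fin d, W j p * D (ey j) (lapE ez ψ) p)) :=
    ((continuous_const.mul cLZψ).add (continuous_const.mul cS6ψ)).sub cS3ψ
  have k1 : Integrable (fun p : Q d => φ p *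
      (aF p * lapE ey (lapE ez ψ) p
        + 4 * (∑ j : Fin d, W j p * D (ey j) (lapE ez ψ) p)
        - 4 * (∑ j : Fin d, W j p * D (ez j) (lapE ey ψ) p)
        + 2 * (d : ℂ) * lapE ey ψ p + 2 * (d : ℂ) * lapE ez ψ p
        - 8 * (∑ j : Fin d, D (ey j) (D (ez j) ψ) p))) :=
    integrable_cpt (hφ.continuous.mul cG1) (hcs_mul_right hφc)
  have k2 : Integrable (fun p : Q d => φ p * ((d : ℂ) * lapE ey ψ p
      - 2 * (∑ j : Fin d, D (ey j) (D (ez j) ψ) p)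
      - (∑ j : Fin d, W j p * D (ez j) (lapE ey ψ) p))) :=
    integrable_cpt (hφ.continuous.mul cG2) (hcs_mul_right hφc)
  have k3 : Integrable (fun p : Q d => φ p * (-(d : ℂ) * lapE ez ψ p
      + 2 * (∑ j : Fin d, D (ey j) (D (ez j) ψ) p)
      - (∑ j : Fin d, W j p * D (ey j) (lapE ez ψ) p))) :=
    integrable_cpt (hφ.continuous.mul cG3) (hcs_mul_right hφc)
  have k4 : Integrable (fun p : Q d => φ p * lapE ey ψ p) :=
    integrable_cpt (hφ.continuous.mul cLYψ) (hcs_mul_right hφc)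
  have k5 : Integrable (fun p : Q d => φ p * lapE ez ψ p) :=
    integrable_cpt (hφ.continuous.mul cLZψ) (hcs_mul_right hφc)
  have k6 : Integrable (fun p : Q d => φ p *
      (∑ j : Fin d, D (ey j) (D (ez j) ψ) p)) :=
    integrable_cpt (hφ.continuous.mul cS6ψ) (hcs_mul_right hφc)
  rw [hE,
      split6 (1 : ℂ) (4*μ) (-(4*lam)) (2*μ*(2*μ+2-(d:ℂ))) (2*lam*(2*lam+2-(d:ℂ)))
        (-(8*lam*μ)) i1 i2 i3 i4 i5 i6]
  beta_reduce
  rw [T1 hφ hφc hψ, T2 hφ hφc hψ hψc, T3 hφ hφc hψ hψc,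
      move_lap ey hφ hφc hψ, move_lap ez hφ hφc hψ, T6 hφ hφc hψ hψc]
  simp only [← integral_const_mul]
  have K1 : Integrable (fun p : Q d => (1:ℂ) * (φ p * (aF p * lapE ey (lapE ez ψ) p + 4 * (∑ j : Fin d, W j p * D (ey j) (lapE ez ψ) p) - 4 * (∑ j : Fin d, W j p * D (ez j) (lapE ey ψ) p) + 2 * (d : ℂ) * lapE ey ψ p + 2 * (d : ℂ) * lapE ez ψ p - 8 * (∑ j : Fin d, D (ey j) (D (ez j) ψ) p)))) := k1.const_mul _
  have K2 : Integrable (fun p : Q d => (1:ℂ) * (φ p * (aF p * lapE ey (lapE ez ψ) p + 4 * (∑ j : Fin d, W j p * D (ey j) (lapE ez ψ) p) - 4 * (∑ j : Fin d, W j p * D (ez j) (lapE ey ψ) p) + 2 * (d : ℂ) * lapE ey ψ p + 2 * (d : ℂ) * lapE ez ψ p - 8 * (∑ j : Fin d, D (ey j) (D (ez j) ψ) p))) + (4*μ) * (φ p * ((d : ℂ) * lapE ey ψ p - 2 * (∑ j : Fin d, D (ey j) (D (ez j) ψ) p) - (∑ j : Fin d, W j p * D (ez j) (lapE ey ψ)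 p)))) := K1.add (k2.const_mul _)
  have K3 : Integrable (fun p : Q d => (1:ℂ) * (φ p * (aF p * lapE ey (lapE ez ψ) p + 4 * (∑ j : Fin d, W j p * D (ey j) (lapE ez ψ) p) - 4 * (∑ j : Fin d, W j p * D (ez j) (lapE ey ψ) p) + 2 * (d : ℂ) * lapE ey ψ p + 2 * (d : ℂ) * lapE ez ψ p - 8 * (∑ j : Fin d, D (ey j) (D (ez j) ψ) p))) + (4*μ) * (φ p * ((d : ℂ) * lapE ey ψ p - 2 * (∑ j : Fin d, D (ey j) (D (ez j) ψ) p) - (∑ j : Fin d, W j p * D (ez j) (lapE ey ψ) p))) + (-(4*lam)) * (φ p * (-(d : ℂ) * lapE ez ψ p + 2 * (∑ j : Fin d, D (ey j) (D (ez j) ψ) p) - (∑ j : Fin d, W j p * D (ey j) (lapE ez ψ) p)))) := K2.add (k3.const_mul _)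
  have K4 : Integrable (fun p : Q d => (1:ℂ) * (φ p * (aF p * lapE ey (lapE ez ψ) p + 4 * (∑ j : Fin d, W j p * D (ey j) (lapE ez ψ) p) - 4 * (∑ j : Fin d, W j p * D (ez j) (lapE ey ψ) p) + 2 * (d : ℂ) * lapE ey ψ p + 2 * (d : ℂ) * lapE ez ψ p - 8 * (∑ j : Fin d, D (ey j) (D (ez j) ψ) p))) + (4*μ) * (φ p * ((d : ℂ) * lapE ey ψ p - 2 * (∑ j : Fin d, D (ey j) (D (ez j) ψ) p) - (∑ j : Fin d, W j p * D (ez j) (lapE ey ψ) p))) + (-(4*lam)) * (φ p * (-(d : ℂ) * lapE ez ψ p + 2 * (∑ j : Fin d, D (ey j) (D (ez j) ψ) p) - (∑ j : Fin d, W j p * D (ey j) (lapE ez ψ) p))) + (2*μ*(2*μ+2-(d:ℂ))) * (φ p * lapE ey ψ p)) := K3.add (k4.const_mul _)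
  have K5 : Integrable (fun p : Q d => (1:ℂ) * (φ p * (aF p * lapE ey (lapE ez ψ) p + 4 * (∑ j : Fin d, W j p * D (ey j) (lapE ez ψ) p) - 4 * (∑ j : Fin d, W j p * D (ez j) (lapE ey ψ) p) + 2 * (d : ℂ) * lapE ey ψ p + 2 * (d : ℂ) * lapE ez ψ p - 8 * (∑ j : Fin d, D (ey j) (D (ez j) ψ) p))) + (4*μ) * (φ p * ((d : ℂ) * lapE ey ψ p - 2 * (∑ j : Fin d, D (ey j) (D (ez j) ψ) p) - (∑ j : Fin d, W j p * D (ez j) (lapE ey ψ) p))) + (-(4*lam)) * (φ p * (-(d : ℂ) * lapE ez ψ p + 2 * (∑ j : Fin d, D (ey j) (D (ez j) ψ) p) - (∑ j : Fin d, W j p * D (ey j) (lapE ez ψ) p))) + (2*μ*(2*μ+2-(d:ℂ))) * (φ p * lapE ey ψ p) + (2*lam*(2*lam+2-(d:ℂ))) * (φ p * lapE ez ψ p)) := K4.add (k5.const_mul _)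
  have K6 : Integrable (fun p : Q d => (1:ℂ) * (φ p * (aF p * lapE ey (lapE ez ψ) p + 4 * (∑ j : Fin d, W j p * D (ey j) (lapE ez ψ) p) - 4 * (∑ j : Fin d, W j p * D (ez j) (lapE ey ψ) p) + 2 * (d : ℂ) * lapE ey ψ p + 2 * (d : ℂ) * lapE ez ψ p - 8 * (∑ j : Fin d, D (ey j) (D (ez j) ψ) p))) + (4*μ) * (φ p * ((d : ℂ) * lapE ey ψ p - 2 * (∑ j : Fin d, D (ey j) (D (ez j) ψ) p) - (∑ j : Fin d, W j p * D (ez j) (lapE ey ψ) p))) + (-(4*lam)) * (φ p * (-(d : ℂ) * lapE ez ψ p + 2 * (∑ j : Fin d, D (ey j) (D (ez j) ψ) p) - (∑ j : Fin d, W j p * D (ey j) (lapE ez ψ) p))) + (2*μ*(2*μ+2-(d:ℂ))) * (φ p * lapE ey ψ p) + (2*lam*(2*lam+2-(d:ℂ))) * (φ p * lapE ez ψ p) + (-(8*lam*μ)) * (φ p * (∑ j : Fin d, D (ey j) (D (ez j) ψ) p))) := K5.add (k6.const_mul _)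
  rw [← integral_add K1 (k2.const_mul _),
      ← integral_add K2 (k3.const_mul _),
      ← integral_add K3 (k4.const_mul _),
      ← integral_add K4 (k5.const_mul _),
      ← integral_add K5 (k6.const_mul _),
      hF]
  congr 1
  funext p
  ring
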